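/- Hecke relation for the Perk–Schultz matrix: the constant Perk–Schultz matrix R := R_q(1,0) is invertible and c ∘ R^{−1} ∘ c = R − (q − q^{−1}) · c as linear operators on V ⊗ V. -/

import Mathlib

/-!
Common setup: `V = ℂ^(M+N)` is modeled as `Fin (M+N) → ℂ`, and `V ⊗ V` as
`Fin (M+N) × Fin (M+N) → ℂ`.  Linear operators on `V ⊗ V` are modeled as matrices
indexed by `Fin (M+N) × Fin (M+N)`, acting on column vectors by `Matrix.mulVec`,
so that composition of operators corresponds to matrix multiplication.

Indices `i : Fin (M+N)` correspond to `i+1 ∈ I = {1, …, M+N}`; thus the condition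
`i ≤ M` of the paper becomes `(i : ℕ) < M`.
-/

namespace PS

/-- The parity `|i| ∈ {0,1}`: `0` if `i ≤ M`, `1` if `i > M`. -/
def par (M : ℕ) {k : ℕ} (i : Fin k) : ℕ := if (i : ℕ) < M then 0 else 1

/-- `q_i = q^{d_i}`: equals `q` if `i ≤ M` and `q⁻¹` if `i > M`. -/
noncomputable def qi (M : ℕ) (q : ℂ) {k : ℕ} (i : Fin k) : ℂ := if (i : ℕ) < M then q else q⁻¹

/-- The Perk–Schultz matrix `R_q(z,w)`, given by its entries: row `p = (a,b)`,
column `c = (c,d)`.  The only nonzero entries are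
`R_{(a,a),(a,a)} = z q_a − w q_a⁻¹`, `R_{(a,b),(a,b)} = z − w` for `a ≠ b`,
`R_{(b,a),(a,b)} = z (q_a − q_a⁻¹)` for `a < b`, and
`R_{(a,b),(b,a)} = (−1)^{|a|+|b|} w (q_b − q_b⁻¹)` for `a < b`. -/
noncomputable def R (M : ℕ) (q : ℂ) {k : ℕ} (z w : ℂ) :
    Matrix (Fin k × Fin k) (Fin k × Fin k) ℂ := Matrix.of fun p c =>
  if p.1 = c.1 ∧ p.2 = c.2 then
    (if c.1 = c.2 then z * qi M q c.1 - w * (qi M q c.1)⁻¹ else z - w)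
  else if p.1 = c.2 ∧ p.2 = c.1 then
    (if c.1 < c.2 then z * (qi M q c.1 - (qi M q c.1)⁻¹)
     else (-1 : ℂ) ^ (par M c.1 + par M c.2) * w * (qi M q c.1 - (qi M q c.1)⁻¹))
  else 0

/-- The graded flip `c : V ⊗ V → V ⊗ V`, `c(v_i ⊗ v_j) = (−1)^{|i||j|} v_j ⊗ v_i`. -/
def gflip (M : ℕ) {k : ℕ} : Matrix (Fin k × Fin k) (Fin k × Fin k) ℂ :=
  Matrix.of fun p c =>
    if p.1 = c.2 ∧ p.2 = c.1 then (-1 : ℂ) ^ (par M c.1 * par M c.2) else 0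

/-- `A ⊗ Id_V` acting on `V ⊗ V ⊗ V` (on tensor factors 1,2). -/
def lift12 {k : ℕ} (A : Matrix (Fin k × Fin k) (Fin k × Fin k) ℂ) :
    Matrix (Fin k × Fin k × Fin k) (Fin k × Fin k × Fin k) ℂ :=
  Matrix.of fun p r => if p.2.2 = r.2.2 then A (p.1, p.2.1) (r.1, r.2.1) else 0

/-- `Id_V ⊗ A` acting on `V ⊗ V ⊗ V` (on tensor factors 2,3). -/
def lift23 {k : ℕ} (A : Matrix (Fin k × Fin k) (Fin k × Fin k) ℂ) :
    Matrix (Fin k × Fin k × Fin k) (Fin k × Fin k × Fin k) ℂ :=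
  Matrix.of fun p r => if p.1 = r.1 then A p.2 r.2 else 0

end PS

/-!
With `Ř := R ∘ c` and `c ∘ c = 1`, the claim says `R⁻¹ = c ∘ (Ř - (q - q⁻¹))`, so it is the
quadratic relation `(Ř - q)(Ř + q⁻¹) = 0`. The operator `Ř` preserves every span
`⟨v_a ⊗ v_b, v_b ⊗ v_a⟩`: on `v_a ⊗ v_a` it is the scalar `(-1)^|a| q_a ∈ {q, -q⁻¹}`, and on a
two-dimensional block the relation reduces to `q_a - q_a⁻¹ = (-1)^(|a||b|) (q - q⁻¹)` for `a < b`.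
-/

theorem neg_one_pow_mul_self {α : Type*} [Monoid α] [HasDistribNeg α] (n : ℕ) :
    (-1 : α) ^ n * (-1) ^ n = 1 := by
  rw [← pow_add, ← two_mul, pow_mul, neg_one_sq, one_pow]

theorem Matrix.isUnit_and_conj_inv_eq_of_hecke {n K : Type*} [Fintype n] [DecidableEq n]
    [CommRing K] {A C : Matrix n n K} {t : K} (hC : C * C = 1)
    (hA : A * C * (A * C) = t • (A * C) + 1) :
    IsUnit A ∧ C * A⁻¹ * C = A - t • C := by
  have hinv : A * (C * (A * C - t • 1)) = 1 := by
    rw [← Matrix.mul_assoc, Matrix.mul_sub, hA, Matrix.mul_smul, Matrix.mul_one]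
    abel
  refine ⟨IsUnit.of_mul_eq_one _ hinv, ?_⟩
  rw [Matrix.inv_eq_right_inv hinv, ← Matrix.mul_assoc, hC, Matrix.one_mul, Matrix.sub_mul,
    Matrix.mul_assoc, hC, Matrix.mul_one, Matrix.smul_mul, Matrix.one_mul]

namespace PS

open Matrix

variable {M k : ℕ} {q : ℂ}

theorem gflip_mulVec_single (a b : Fin k) :
    gflip M *ᵥ Pi.single (a, b) 1 = (-1 : ℂ) ^ (par M a * par M b) • Pi.single (b, a) 1 := by
  ext ⟨x, y⟩
  simp only [mulVec_single_one, col_apply, gflip, of_apply, Pi.smul_apply,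
    Pi.single_apply, Prod.mk.injEq, smul_eq_mul]
  split_ifs <;> simp_all

theorem gflip_mul_gflip : gflip (k := k) M * gflip M = 1 := by
  refine ext_col fun ⟨a, b⟩ => ?_
  rw [← mulVec_single_one, ← mulVec_single_one, ← mulVec_mulVec, gflip_mulVec_single,
    mulVec_smul, gflip_mulVec_single, smul_smul, mul_comm (par M b), neg_one_pow_mul_self,
    one_smul, one_mulVec]

theorem R_mulVec_single_self (a : Fin k) :
    R M q 1 0 *ᵥ Pi.single (a, a) 1 = qi M q a • Pi.single (a, a) 1 := by
  ext ⟨x, y⟩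
  simp only [mulVec_single_one, col_apply, R, of_apply, Pi.smul_apply,
    Pi.single_apply, Prod.mk.injEq, smul_eq_mul]
  split_ifs <;> simp_all

theorem R_mulVec_single_of_lt {a b : Fin k} (hab : a < b) :
    R M q 1 0 *ᵥ Pi.single (a, b) 1
      = Pi.single (a, b) 1 + (qi M q a - (qi M q a)⁻¹) • Pi.single (b, a) 1 := by
  ext ⟨x, y⟩
  simp only [mulVec_single_one, col_apply, R, of_apply, Pi.smul_apply,
    Pi.add_apply, Pi.single_apply, Prod.mk.injEq, smul_eq_mul]
  split_ifs <;> simp_all [hab.ne, hab.ne']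

theorem R_mulVec_single_of_gt {a b : Fin k} (hba : b < a) :
    R M q 1 0 *ᵥ Pi.single (a, b) 1 = Pi.single (a, b) 1 := by
  ext ⟨x, y⟩
  simp only [mulVec_single_one, col_apply, R, of_apply, Pi.single_apply, Prod.mk.injEq]
  split_ifs <;> simp_all [hba.ne, hba.ne', hba.not_gt]

theorem qi_sub_inv_of_le {a b : Fin k} (hab : a ≤ b) :
    qi M q a - (qi M q a)⁻¹ = (-1 : ℂ) ^ (par M a * par M b) * (q - q⁻¹) := by
  unfold qi par
  split_ifs <;> first | omega | simp

theorem neg_one_pow_par_mul_qi_sq (hq : q ≠ 0) (a : Fin k) :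
    (-1 : ℂ) ^ (par M a * par M a) * qi M q a * ((-1 : ℂ) ^ (par M a * par M a) * qi M q a)
      = (q - q⁻¹) * ((-1 : ℂ) ^ (par M a * par M a) * qi M q a) + 1 := by
  unfold qi par
  split_ifs <;> field_simp <;> ring

noncomputable def Rcheck (M : ℕ) (q : ℂ) (k : ℕ) : Matrix (Fin k × Fin k) (Fin k × Fin k) ℂ :=
  R M q 1 0 * gflip M

theorem Rcheck_mulVec (v : Fin k × Fin k → ℂ) :
    Rcheck M q k *ᵥ v = R M q 1 0 *ᵥ (gflip M *ᵥ v) :=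
  (mulVec_mulVec _ _ _).symm

theorem Rcheck_sq (hq : q ≠ 0) :
    Rcheck M q k * Rcheck M q k = (q - q⁻¹) • Rcheck M q k + 1 := by
  refine ext_col fun ⟨a, b⟩ => ?_
  simp only [← mulVec_single_one, ← mulVec_mulVec, add_mulVec, smul_mulVec, one_mulVec]
  have hs := neg_one_pow_mul_self (α := ℂ) (par M a * par M b)
  rcases lt_trichotomy a b with hab | rfl | hba
  · simp only [Rcheck_mulVec, gflip_mulVec_single, mulVec_smul, R_mulVec_single_of_gt hab,
      R_mulVec_single_of_lt hab, qi_sub_inv_of_le hab.le, mul_comm (par M b)]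
    linear_combination (norm := module)
      hs • Pi.single (a, b) 1 + ((-1) ^ (par M a * par M b) * (q - q⁻¹)) • hs • Pi.single (b, a) 1
  · simp only [Rcheck_mulVec, gflip_mulVec_single, mulVec_smul, R_mulVec_single_self, smul_smul]
    rw [neg_one_pow_par_mul_qi_sq hq, add_smul, one_smul]
  · simp only [Rcheck_mulVec, gflip_mulVec_single, mulVec_smul, mulVec_add,
      R_mulVec_single_of_gt hba, R_mulVec_single_of_lt hba, qi_sub_inv_of_le hba.le,
      mul_comm (par M b)]
    linear_combination (norm := module) hs • Pi.single (a, b) 1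
      + ((-1) ^ (par M a * par M b) * (q - q⁻¹)) • hs • Pi.single (b, a) 1
      + ((-1) ^ (par M a * par M b) * (q - q⁻¹)) ^ 2 • hs • Pi.single (a, b) 1

end PS

open PS in
theorem perkSchultz_hecke_general (M N : ℕ) (q : ℂ) (hq : q ≠ 0) :
    IsUnit (R M q 1 0 :
        Matrix (Fin (M + N) × Fin (M + N)) (Fin (M + N) × Fin (M + N)) ℂ)
    ∧ gflip (k := M + N) M * (R M q 1 0)⁻¹ * gflip M
        = R M q 1 0 - (q - q⁻¹) • gflip M :=
  Matrix.isUnit_and_conj_inv_eq_of_hecke gflip_mul_gflip (Rcheck_sq hq)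

open PS in
/-- Hecke relation: with `R := R_q(1,0)` invertible,
`c ∘ R⁻¹ ∘ c = R − (q − q⁻¹) · c`. -/
theorem perkSchultz_hecke (M N : ℕ) (hMN : 1 ≤ M + N) (q : ℂ) (hq : q ≠ 0) :
    IsUnit (R M q 1 0 :
        Matrix (Fin (M + N) × Fin (M + N)) (Fin (M + N) × Fin (M + N)) ℂ)
    ∧ gflip (k := M + N) M * (R M q 1 0)⁻¹ * gflip M
        = R M q 1 0 - (q - q⁻¹) • gflip M :=
  perkSchultz_hecke_general M N q hq
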